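/- Let μ be a compactly supported Borel probability measure on SL(2,ℝ). Suppose (α_k, γ_k) ∈ [0,∞) × [0,2] converges to (α, γ) ∈ [0,∞) × [0,2], and let ε_k > 0 with ε_k → 0. Then limsup_{k→∞} I_{γ_k}(α_k) ≤ limsup_{k→∞} I_{γ_k}(α_k, ε_k) ≤ I_γ(α). In particular, the map (α, γ) ↦ I_γ(α), taking values in ℝ ∪ {−∞}, is upper semicontinuous on [0,∞) × [0,2]. -/

import Mathlib

open MeasureTheory Filter Topology
open scoped ENNReal

noncomputable section

abbrev SL2 : Type := Matrix.SpecialLinearGroup (Fin 2) ℝ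
abbrev V2 : Type := EuclideanSpace ℝ (Fin 2)
abbrev P1 : Type := Projectivization ℝ V2

instance : TopologicalSpace SL2 :=
  inferInstanceAs (TopologicalSpace {A : Matrix (Fin 2) (Fin 2) ℝ // A.det = 1})
instance : MeasurableSpace SL2 := borel SL2
instance : BorelSpace SL2 := ⟨rfl⟩
instance : TopologicalSpace P1 :=
  inferInstanceAs (TopologicalSpace (Quotient (projectivizationSetoid ℝ V2)))
instance : MeasurableSpace P1 := borel P1
instance : BorelSpace P1 := ⟨rfl⟩

def gnorm (g : SL2) : ℝ := ‖Matrix.toEuclideanCLM (𝕜 := ℝ) (g : Matrix (Fin 2) (Fin 2) ℝ)‖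

def gvec (g : SL2) (u : V2) : V2 :=
  Matrix.toEuclideanCLM (𝕜 := ℝ) (g : Matrix (Fin 2) (Fin 2) ℝ) u

lemma gvec_mul (g h : SL2) (u : V2) : gvec g (gvec h u) = gvec (g * h) u := by
  simp [gvec, Matrix.SpecialLinearGroup.coe_mul, map_mul, ContinuousLinearMap.mul_apply]

lemma gvec_one (u : V2) : gvec 1 u = u := by
  simp [gvec]

lemma gvec_ne_zero (g : SL2) {u : V2} (hu : u ≠ 0) : gvec g u ≠ 0 := by
  intro h
  apply hu
  have h2 := congrArg (gvec g⁻¹) h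
  rw [gvec_mul, inv_mul_cancel, gvec_one] at h2
  rw [h2]
  simp [gvec]

def pact (g : SL2) (x : P1) : P1 :=
  Projectivization.mk ℝ (gvec g x.rep) (gvec_ne_zero g x.rep_nonzero)

def dP (x y : P1) : ℝ :=
  |x.rep 0 * y.rep 1 - x.rep 1 * y.rep 0| / (‖x.rep‖ * ‖y.rep‖)

def gxnorm (g : SL2) (x : P1) : ℝ := ‖gvec g x.rep‖ / ‖x.rep‖

def pInner (x y : P1) : ℝ := |(inner ℝ x.rep y.rep : ℝ)| / (‖x.rep‖ * ‖y.rep‖)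

/-- The (topological) support of a measure. -/
def msupp (μ : Measure SL2) : Set SL2 :=
  {g | ∀ U : Set SL2, IsOpen U → g ∈ U → 0 < μ U}

def IsCompactlySupported (μ : Measure SL2) : Prop :=
  ∃ K : Set SL2, IsCompact K ∧ μ Kᶜ = 0

/-- The closed semigroup generated by the support of `μ`. -/
def Smu (μ : Measure SL2) : Set SL2 :=
  closure ((Subsemigroup.closure (msupp μ) : Subsemigroup SL2) : Set SL2)

def StronglyIrreducible (μ : Measure SL2) : Prop :=
  ¬ ∃ F : Finset P1, F.Nonempty ∧ ∀ g ∈ Smu μ, ∀ x ∈ F, pact g x ∈ F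

def Proximal (μ : Measure SL2) : Prop :=
  ∃ g ∈ Smu μ, 2 < |Matrix.trace (g : Matrix (Fin 2) (Fin 2) ℝ)|

def SIP (μ : Measure SL2) : Prop := StronglyIrreducible μ ∧ Proximal μ

/-- `convPow μ n` is the `n`-th convolution power `μⁿ`. -/
def convPow (μ : Measure SL2) : ℕ → Measure SL2
  | 0 => Measure.dirac 1
  | n + 1 => Measure.map (fun p : SL2 × SL2 => p.1 * p.2) ((convPow μ n).prod μ)

def IsOmegaMinus (ω : SL2 → P1) : Prop :=
  ∀ g : SL2, 1 < gnorm g → gxnorm g (ω g) = (gnorm g)⁻¹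

def IsUpsilonPlus (υ : SL2 → P1) : Prop :=
  ∀ g : SL2, 1 < gnorm g⁻¹ → gxnorm g⁻¹ (υ g) = (gnorm g⁻¹)⁻¹

def Eball (α ε : ℝ) (n : ℕ) : Set SL2 :=
  {g | |(n : ℝ)⁻¹ * Real.log (gnorm g) - α| ≤ ε}

def Egam (ω : SL2 → P1) (γ α ε : ℝ) (n : ℕ) (x : P1) : Set SL2 :=
  {g | g ∈ Eball α ε n ∧ dP x (ω g) ≤ Real.exp (-(n : ℝ) * (γ - ε) * α)}

def EgamStar (υ : SL2 → P1) (α ε : ℝ) (n : ℕ) (x : P1) : Set SL2 :=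
  {g | g ∈ Eball α ε n ∧ dP x (υ g) ≤ Real.exp (-(n : ℝ) * (2 - ε) * α)}

def Etilde (ω : SL2 → P1) (γ α ε : ℝ) (n : ℕ) (x : P1) : Set SL2 :=
  if γ < 2 then
    {g | g ∈ Eball α ε n ∧ Real.exp (-(n : ℝ) * (γ + ε) * α) ≤ dP x (ω g) ∧
      dP x (ω g) ≤ Real.exp (-(n : ℝ) * (γ - ε) * α)}
  else Egam ω 2 α ε n x

def IfinN (μ : Measure SL2) (ω : SL2 → P1) (γ α ε : ℝ) (n : ℕ) : EReal :=
  (((n : ℝ)⁻¹ : ℝ) : EReal) * ENNReal.log (⨆ x : P1, convPow μ n (Egam ω γ α ε n x))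

def Ieps (μ : Measure SL2) (ω : SL2 → P1) (γ α ε : ℝ) : EReal :=
  Filter.atTop.limsup (fun n => IfinN μ ω γ α ε n)

def Ifinal (μ : Measure SL2) (ω : SL2 → P1) (γ α : ℝ) : EReal :=
  ⨅ (ε : ℝ) (_ : 0 < ε), Ieps μ ω γ α ε

def Aset (μ : Measure SL2) (ω : SL2 → P1) : Set ℝ :=
  {α : ℝ | Ifinal μ ω 0 α ≠ ⊥}

def I2starEps (μ : Measure SL2) (υ : SL2 → P1) (α ε : ℝ) : EReal :=
  Filter.atTop.limsup (fun n : ℕ =>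
    (((n : ℝ)⁻¹ : ℝ) : EReal) * ENNReal.log (⨆ x : P1, convPow μ n (EgamStar υ α ε n x)))

def I2star (μ : Measure SL2) (υ : SL2 → P1) (α : ℝ) : EReal :=
  ⨅ (ε : ℝ) (_ : 0 < ε), I2starEps μ υ α ε

def kSeq (μ : Measure SL2) (t : ℝ) (n : ℕ) : ℝ :=
  (n : ℝ)⁻¹ * Real.log (∫ g, gnorm g ^ t ∂ convPow μ n)

/-- `k : ℝ → ℝ` is the limit defining `k(t)`. -/
def KTendsto (μ : Measure SL2) (k : ℝ → ℝ) : Prop :=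
  ∀ t : ℝ, Filter.Tendsto (fun n => kSeq μ t n) Filter.atTop (nhds (k t))

def kplusSeq (μ : Measure SL2) (t : ℝ) (n : ℕ) : ℝ :=
  (n : ℝ)⁻¹ * Real.log (⨆ x : P1, ∫ g, gxnorm g x ^ t ∂ convPow μ n)

def kplus (μ : Measure SL2) (t : ℝ) : ℝ :=
  Filter.atTop.limsup (fun n => kplusSeq μ t n)

def sup2 (μ : Measure SL2) (ω : SL2 → P1) (t : ℝ) : EReal :=
  ⨆ α ∈ Aset μ ω, (Ifinal μ ω 2 α + ((-(t * α) : ℝ) : EReal))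

def tc (μ : Measure SL2) (ω : SL2 → P1) (k : ℝ → ℝ) : ℝ :=
  sInf {t : ℝ | sup2 μ ω t < ((k t : ℝ) : EReal)}

def zetat (μ : Measure SL2) (ω : SL2 → P1) (k : ℝ → ℝ) (t : ℝ) : ℝ :=
  sSup {ζ : ℝ |
    (⨆ α ∈ Aset μ ω, (Ifinal μ ω 2 α + ((-(t * α) + 2 * ζ * α : ℝ) : EReal)))
      < ((k t : ℝ) : EReal)}

def Pt (μ : Measure SL2) (t : ℝ) (ψ : P1 → ℝ) : P1 → ℝ :=
  fun x => ∫ g, gxnorm g x ^ t * ψ (pact g x) ∂μ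

def sl2transpose (g : SL2) : SL2 :=
  ⟨Matrix.transpose (g : Matrix (Fin 2) (Fin 2) ℝ), by rw [Matrix.det_transpose]; exact g.2⟩

def PtStar (μ : Measure SL2) (t : ℝ) (ψ : P1 → ℝ) : P1 → ℝ :=
  fun w => ∫ g, gxnorm (sl2transpose g) w ^ t * ψ (pact (sl2transpose g) w) ∂μ

def BoundedFn (f : P1 → ℝ) : Prop := ∃ M : ℝ, ∀ x, |f x| ≤ M

def IsEigenMeas (μ : Measure SL2) (t : ℝ) (ν : Measure P1) (c : ℝ) : Prop :=
  ∀ f : P1 → ℝ, Measurable f → BoundedFn f →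
    ∫ x, Pt μ t f x ∂ν = c * ∫ x, f x ∂ν

def IsEigenMeasStar (μ : Measure SL2) (t : ℝ) (ν : Measure P1) (c : ℝ) : Prop :=
  ∀ f : P1 → ℝ, Measurable f → BoundedFn f →
    ∫ x, PtStar μ t f x ∂ν = c * ∫ x, f x ∂ν

def IsFurstenberg (μ : Measure SL2) (ν : Measure P1) : Prop :=
  IsProbabilityMeasure ν ∧ ∀ f : P1 → ℝ, Measurable f → BoundedFn f →
    ∫ g, (∫ x, f (pact g x) ∂ν) ∂μ = ∫ x, f x ∂ν

def HolderWithC (C ζ : ℝ) (f : P1 → ℝ) : Prop :=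
  ∀ x y : P1, |f x - f y| ≤ C * dP x y ^ ζ

def HolderFn (ζ : ℝ) (f : P1 → ℝ) : Prop := ∃ C : ℝ, HolderWithC C ζ f

def hSemi (ζ : ℝ) (f : P1 → ℝ) : ℝ :=
  sSup {c : ℝ | ∃ x y : P1, x ≠ y ∧ c = |f x - f y| / dP x y ^ ζ}

def supNorm (f : P1 → ℝ) : ℝ := ⨆ x : P1, |f x|

def hNorm (ζ : ℝ) (f : P1 → ℝ) : ℝ := hSemi ζ f + supNorm f

def frostman (ν : Measure P1) : ℝ :=
  sSup {s : ℝ | 0 ≤ s ∧ ∃ C : ℝ, 0 < C ∧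
    ∀ x : P1, ∀ r : ℝ, 0 < r → (ν {y | dP x y ≤ r}).toReal ≤ C * r ^ s}

def rotSL (θ : ℝ) : SL2 :=
  ⟨!![Real.cos θ, -Real.sin θ; Real.sin θ, Real.cos θ], by
    simp [Matrix.det_fin_two_of]
    ring_nf
    rw [← Real.sin_sq_add_cos_sq θ]
    ring⟩

def IsRotInvariant (lam : Measure P1) : Prop :=
  IsProbabilityMeasure lam ∧ ∀ θ : ℝ, Measure.map (pact (rotSL θ)) lam = lam

def riesz (t : ℝ) (ν : Measure P1) (x : P1) : ℝ≥0∞ :=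
  ∫⁻ y, ENNReal.ofReal (dP x y) ^ t ∂ν

/-!
Moving `(α, γ)` a little and replacing `ε` by a smaller `ε'` only enlarges the sets
`E_γ(α, ε, n, x)`: the window `|log‖g‖/n - α| ≤ ε` absorbs the shift of `α`, and the
threshold `exp (-n (γ - ε) α)` only grows, except where it already exceeds `1 ≥ d_P`.
Hence `I_{γ'}(α', ε') ≤ I_γ(α, ε)` near `(α, γ)` once `ε' ≤ ε / 2`, and taking the infimum
over `ε` gives both inequalities and the upper semicontinuity.
-/

lemma abs_cross_le_norm_mul_norm (u v : V2) : |u 0 * v 1 - u 1 * v 0| ≤ ‖u‖ * ‖v‖ := by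
  have hu : ‖u‖ ^ 2 = u 0 ^ 2 + u 1 ^ 2 := by
    simp [EuclideanSpace.norm_sq_eq, Fin.sum_univ_two]
  have hv : ‖v‖ ^ 2 = v 0 ^ 2 + v 1 ^ 2 := by
    simp [EuclideanSpace.norm_sq_eq, Fin.sum_univ_two]
  -- Lagrange's identity: (u₀v₁ - u₁v₀)² + (u₀v₀ + u₁v₁)² = ‖u‖²‖v‖².
  have hsq : (u 0 * v 1 - u 1 * v 0) ^ 2 ≤ (‖u‖ * ‖v‖) ^ 2 := by
    rw [mul_pow, hu, hv]
    nlinarith [sq_nonneg (u 0 * v 0 + u 1 * v 1)]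
  simpa [abs_of_nonneg (mul_nonneg (norm_nonneg u) (norm_nonneg v))] using sq_le_sq.1 hsq

lemma dP_le_one (x y : P1) : dP x y ≤ 1 :=
  div_le_one_of_le₀ (abs_cross_le_norm_mul_norm _ _)
    (mul_nonneg (norm_nonneg _) (norm_nonneg _))

lemma Eball_subset {α₁ ε₁ α₂ ε₂ : ℝ} (h : ε₁ + |α₁ - α₂| ≤ ε₂) (n : ℕ) :
    Eball α₁ ε₁ n ⊆ Eball α₂ ε₂ n := fun g hg =>
  calc |(n : ℝ)⁻¹ * Real.log (gnorm g) - α₂|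
      ≤ |(n : ℝ)⁻¹ * Real.log (gnorm g) - α₁| + |α₁ - α₂| := abs_sub_le _ _ _
    _ ≤ ε₂ := by simp only [Eball, Set.mem_ofPred_eq] at hg; linarith

/-- Since `dP ≤ 1`, a threshold `exp (-n t)` with `t ≤ 0` constrains nothing. -/
lemma Egam_subset (ω : SL2 → P1) {γ₁ α₁ ε₁ γ₂ α₂ ε₂ : ℝ}
    (hε : ε₁ + |α₁ - α₂| ≤ ε₂) (hγ : (γ₂ - ε₂) * α₂ ≤ max ((γ₁ - ε₁) * α₁) 0)
    (n : ℕ) (x : P1) : Egam ω γ₁ α₁ ε₁ n x ⊆ Egam ω γ₂ α₂ ε₂ n x := by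
  rintro g ⟨hg, hd⟩
  refine ⟨Eball_subset hε n hg, ?_⟩
  have hn : (0 : ℝ) ≤ n := n.cast_nonneg
  rcases le_max_iff.1 hγ with hle | hnonpos
  · exact hd.trans (Real.exp_le_exp.2 (by nlinarith [mul_le_mul_of_nonneg_left hle hn]))
  · exact (dP_le_one _ _).trans
      (Real.one_le_exp (by nlinarith [mul_nonneg hn (neg_nonneg.2 hnonpos)]))

lemma Ieps_mono (μ : Measure SL2) (ω : SL2 → P1) {γ₁ α₁ ε₁ γ₂ α₂ ε₂ : ℝ}
    (hε : ε₁ + |α₁ - α₂| ≤ ε₂) (hγ : (γ₂ - ε₂) * α₂ ≤ max ((γ₁ - ε₁) * α₁) 0) :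
    Ieps μ ω γ₁ α₁ ε₁ ≤ Ieps μ ω γ₂ α₂ ε₂ :=
  limsup_le_limsup (Eventually.of_forall fun n =>
    mul_le_mul_of_nonneg_left
      (ENNReal.log_monotone (iSup_mono fun x => measure_mono (Egam_subset ω hε hγ n x)))
      (EReal.coe_nonneg.2 (inv_nonneg.2 n.cast_nonneg)))

lemma Ifinal_le_Ieps (μ : Measure SL2) (ω : SL2 → P1) (γ α : ℝ) {ε : ℝ} (hε : 0 < ε) :
    Ifinal μ ω γ α ≤ Ieps μ ω γ α ε :=
  iInf₂_le ε hε

lemma eventually_threshold_le {ι : Type*} {l : Filter ι} {a c e : ι → ℝ} {α γ ε : ℝ}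
    (hα : 0 ≤ α) (ha : Tendsto a l (𝓝 α)) (hc : Tendsto c l (𝓝 γ)) (hε : 0 < ε)
    (he : ∀ᶠ i in l, e i ≤ ε / 2) :
    ∀ᶠ i in l, (γ - ε) * α ≤ max ((c i - e i) * a i) 0 := by
  rcases hα.eq_or_lt with rfl | hα
  · simp
  have hlim : Tendsto (fun i => (c i - ε / 2) * a i) l (𝓝 ((γ - ε / 2) * α)) :=
    (hc.sub_const _).mul ha
  have hlt : (γ - ε) * α < (γ - ε / 2) * α := by nlinarith
  filter_upwards [hlim.eventually (eventually_gt_nhds hlt), ha.eventually (eventually_gt_nhds hα),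
    he] with i hi hai hei
  exact le_max_of_le_left (hi.le.trans (by nlinarith))

lemma eventually_Ieps_le (μ : Measure SL2) (ω : SL2 → P1) {ι : Type*} {l : Filter ι}
    {a c e : ι → ℝ} {α γ ε : ℝ} (hα : 0 ≤ α) (ha : Tendsto a l (𝓝 α))
    (hc : Tendsto c l (𝓝 γ)) (hε : 0 < ε) (he : ∀ᶠ i in l, e i ≤ ε / 2) :
    ∀ᶠ i in l, Ieps μ ω (c i) (a i) (e i) ≤ Ieps μ ω γ α ε := by
  have hdist : ∀ᶠ i in l, |a i - α| < ε / 2 := by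
    have h0 : Tendsto (fun i => |a i - α|) l (𝓝 0) := by
      simpa using (ha.sub_const α).abs
    exact h0.eventually (eventually_lt_nhds (half_pos hε))
  filter_upwards [hdist, he, eventually_threshold_le hα ha hc hε he] with i hdi hei hγi
  exact Ieps_mono μ ω (by linarith) hγi

theorem statement6_general (μ : Measure SL2)
    (ω : SL2 → P1)
    (a c : ℕ → ℝ) (α γ : ℝ)
    (hα : 0 ≤ α)
    (hconv : Filter.Tendsto (fun j => (a j, c j)) Filter.atTop (nhds (α, γ)))
    (ε : ℕ → ℝ) (hε : ∀ j, 0 < ε j) (hε0 : Filter.Tendsto ε Filter.atTop (nhds 0)) :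
    (Filter.atTop.limsup (fun j => Ifinal μ ω (c j) (a j))
        ≤ Filter.atTop.limsup (fun j => Ieps μ ω (c j) (a j) (ε j)) ∧
      Filter.atTop.limsup (fun j => Ieps μ ω (c j) (a j) (ε j)) ≤ Ifinal μ ω γ α) ∧
    UpperSemicontinuousOn (fun p : ℝ × ℝ => Ifinal μ ω p.2 p.1)
      (Set.Ici (0 : ℝ) ×ˢ Set.Icc (0 : ℝ) 2) := by
  refine ⟨⟨limsup_le_limsup (Eventually.of_forall fun j => Ifinal_le_Ieps μ ω _ _ (hε j)), ?_⟩, ?_⟩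
  · refine le_iInf₂ fun ε' hε' => limsup_le_of_le (h := ?_)
    exact eventually_Ieps_le μ ω hα hconv.fst_nhds hconv.snd_nhds hε'
      (hε0.eventually (eventually_le_nhds (half_pos hε')))
  · intro p hp y hy
    obtain ⟨ε₀, hε₀, hlt⟩ : ∃ ε₀ > 0, Ieps μ ω p.2 p.1 ε₀ < y := by
      simpa only [Ifinal, iInf_lt_iff, exists_prop] using hy
    have hnear := eventually_Ieps_le μ ω (e := fun _ => ε₀ / 2) hp.1
      (continuous_fst.tendsto p) (continuous_snd.tendsto p) hε₀ (.of_forall fun _ => le_rfl)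
    filter_upwards [nhdsWithin_le_nhds hnear] with q hq
    exact ((Ifinal_le_Ieps μ ω _ _ (half_pos hε₀)).trans hq).trans_lt hlt

/-- Upper semicontinuity of `(α,γ) ↦ I_γ(α)`. -/
theorem statement6 (μ : Measure SL2) [IsProbabilityMeasure μ]
    (hcs : IsCompactlySupported μ)
    (ω : SL2 → P1) (hω : IsOmegaMinus ω)
    (a c : ℕ → ℝ) (α γ : ℝ)
    (ha : ∀ j, 0 ≤ a j) (hc : ∀ j, c j ∈ Set.Icc (0 : ℝ) 2)
    (hα : 0 ≤ α) (hγ : γ ∈ Set.Icc (0 : ℝ) 2)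
    (hconv : Filter.Tendsto (fun j => (a j, c j)) Filter.atTop (nhds (α, γ)))
    (ε : ℕ → ℝ) (hε : ∀ j, 0 < ε j) (hε0 : Filter.Tendsto ε Filter.atTop (nhds 0)) :
    (Filter.atTop.limsup (fun j => Ifinal μ ω (c j) (a j))
        ≤ Filter.atTop.limsup (fun j => Ieps μ ω (c j) (a j) (ε j)) ∧
      Filter.atTop.limsup (fun j => Ieps μ ω (c j) (a j) (ε j)) ≤ Ifinal μ ω γ α) ∧
    UpperSemicontinuousOn (fun p : ℝ × ℝ => Ifinal μ ω p.2 p.1)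
      (Set.Ici (0 : ℝ) ×ˢ Set.Icc (0 : ℝ) 2) :=
  statement6_general μ ω a c α γ hα hconv ε hε hε0
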